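/- (Homological lemma.) Let v ∈ ℂ^d, let δ ∈ ℂ^W, and let β̂, β̃ ∈ ℂ^W satisfy β̂_∅ = β̃_∅ = 0, ξ_v β̂ = 0, and ξ_v β̃ = 0. If ξ_v δ = δ★β̂ − β̃★δ, then ξ_v δ = 0. -/

import Mathlib

/-!
Induct on the length of `w`, assuming `ν^v_w ≠ 0` (otherwise there is nothing to prove).
In a term `δ_{w₁} β̂_{w₂}` of `(δ★β̂)_w` with `w₂ ≠ ∅`, the prefix `w₁` is shorter, so
`ν^v_{w₁} δ_{w₁} = 0` by induction, while `ν^v_{w₂} β̂_{w₂} = 0`; since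
`ν^v_{w₁} + ν^v_{w₂} = ν^v_w ≠ 0`, one of the two weights is nonzero and the term vanishes.
The terms of `(β̃★δ)_w` vanish symmetrically.
-/

open scoped BigOperators

/-- Convolution product on `ℂ^W`: `(δ★δ′)_w = Σ_{w=w₁w₂} δ_{w₁} δ′_{w₂}`. -/
noncomputable def conv {A : Type*} (x y : List A → ℂ) : List A → ℂ :=
  fun w => ∑ i ∈ Finset.range (w.length + 1), x (w.take i) * y (w.drop i)

/-- Shuffle product of two words, as a multiset of words. -/
def shuffle {A : Type*} : List A → List A → Multiset (List A)
  | [], w => {w}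
  | w, [] => {w}
  | a :: u, b :: v =>
      ((shuffle u (b :: v)).map (a :: ·)) + ((shuffle (a :: u) v).map (b :: ·))

/-- Membership in the group `G`: the shuffle relations with `γ_∅ = 1`. -/
def isGrp {A : Type*} (γ : List A → ℂ) : Prop :=
  γ [] = 1 ∧ ∀ w w' : List A, γ w * γ w' = ((shuffle w w').map γ).sum

/-- Membership in the Lie algebra `𝔤`. -/
def isLie {A : Type*} (β : List A → ℂ) : Prop :=
  β [] = 0 ∧ ∀ w w' : List A, w ≠ [] → w' ≠ [] → ((shuffle w w').map β).sum = 0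

/-- The unit `1` of the convolution product. -/
def unitCW {A : Type*} : List A → ℂ := fun w => match w with | [] => 1 | _ => 0

/-- `ν^v_ℓ = Σ_j v_j ν_{j,ℓ}` for a letter `ℓ`. -/
noncomputable def nuL {A : Type*} {d : ℕ} (ν : Fin d → A → ℂ) (v : Fin d → ℂ) (ℓ : A) : ℂ :=
  ∑ j, v j * ν j ℓ

/-- `ν^v_w = ν^v_{ℓ₁} + ⋯ + ν^v_{ℓ_n}` for a word `w = ℓ₁⋯ℓ_n`. -/
noncomputable def nuW {A : Type*} {d : ℕ} (ν : Fin d → A → ℂ) (v : Fin d → ℂ) (w : List A) : ℂ :=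
  (w.map (nuL ν v)).sum

/-- The operator `Ξ_v`: `(Ξ_v δ)_w = exp(ν^v_w) δ_w`. -/
noncomputable def XiOp {A : Type*} {d : ℕ} (ν : Fin d → A → ℂ) (v : Fin d → ℂ)
    (δ : List A → ℂ) : List A → ℂ :=
  fun w => Complex.exp (nuW ν v w) * δ w

/-- The operator `ξ_v`: `(ξ_v δ)_w = ν^v_w δ_w`. -/
noncomputable def xiOp {A : Type*} {d : ℕ} (ν : Fin d → A → ℂ) (v : Fin d → ℂ)
    (δ : List A → ℂ) : List A → ℂ :=
  fun w => nuW ν v w * δ w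

theorem mul_eq_zero_of_add_ne_zero {R : Type*} [NonUnitalNonAssocSemiring R] [NoZeroDivisors R]
    {a b x y : R} (hab : a + b ≠ 0) (hx : a * x = 0) (hy : b * y = 0) : x * y = 0 := by
  by_cases ha : a = 0
  · have hb : b ≠ 0 := by simpa [ha] using hab
    rw [(mul_eq_zero.mp hy).resolve_left hb, mul_zero]
  · rw [(mul_eq_zero.mp hx).resolve_left ha, zero_mul]

theorem nuW_append {A : Type*} {d : ℕ} (ν : Fin d → A → ℂ) (v : Fin d → ℂ) (u w : List A) :
    nuW ν v (u ++ w) = nuW ν v u + nuW ν v w := by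
  simp [nuW]

theorem mul_eq_zero_of_mul_eq_conv_sub_conv {A : Type*} (μ : List A → ℂ)
    (hμ : ∀ u w, μ (u ++ w) = μ u + μ w) {δ β₁ β₂ : List A → ℂ}
    (h₁ : β₁ [] = 0) (h₂ : β₂ [] = 0)
    (h₃ : ∀ w, μ w * β₁ w = 0) (h₄ : ∀ w, μ w * β₂ w = 0)
    (h₅ : ∀ w, μ w * δ w = conv δ β₁ w - conv β₂ δ w) (w : List A) :
    μ w * δ w = 0 := by
  by_cases hw : μ w = 0
  · rw [hw, zero_mul]
  have hne : w ≠ [] := by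
    rintro rfl
    exact hw (by simpa using hμ [] [])
  have hsplit (i : ℕ) : μ (w.take i) + μ (w.drop i) ≠ 0 := by
    rwa [← hμ, List.take_append_drop]
  rw [h₅, conv, conv, Finset.sum_eq_zero, Finset.sum_eq_zero, sub_zero]
  · rintro (_ | i) -
    · simp [h₂]
    exact mul_eq_zero_of_add_ne_zero (hsplit _) (h₄ _)
      (mul_eq_zero_of_mul_eq_conv_sub_conv μ hμ h₁ h₂ h₃ h₄ h₅ (w.drop (i + 1)))
  · intro i hi
    obtain hi | rfl := Nat.lt_succ_iff_lt_or_eq.mp (Finset.mem_range.mp hi)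
    · exact mul_eq_zero_of_add_ne_zero (hsplit i)
        (mul_eq_zero_of_mul_eq_conv_sub_conv μ hμ h₁ h₂ h₃ h₄ h₅ (w.take i)) (h₃ _)
    · simp [h₁]
termination_by w.length
decreasing_by
  · simpa using hi
  · simp [List.length_pos_iff.mpr hne]

theorem stmt15_general {A : Type*} {d : ℕ} (ν : Fin d → A → ℂ)
    (v : Fin d → ℂ) (δ βhat βtil : List A → ℂ)
    (h₁ : βhat [] = 0) (h₂ : βtil [] = 0)
    (h₃ : xiOp ν v βhat = 0) (h₄ : xiOp ν v βtil = 0)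
    (h₅ : xiOp ν v δ = conv δ βhat - conv βtil δ) :
    xiOp ν v δ = 0 :=
  funext <| mul_eq_zero_of_mul_eq_conv_sub_conv (nuW ν v) (nuW_append ν v) h₁ h₂
    (congrFun h₃) (congrFun h₄) (congrFun h₅)

/-- homological lemma. If `β̂_∅ = β̃_∅ = 0`, `ξ_v β̂ = 0`, `ξ_v β̃ = 0`
and `ξ_v δ = δ★β̂ − β̃★δ`, then `ξ_v δ = 0`. -/
theorem stmt15 {A : Type*} [Countable A] {d : ℕ} (hd : 1 ≤ d) (ν : Fin d → A → ℂ)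
    (v : Fin d → ℂ) (δ βhat βtil : List A → ℂ)
    (h₁ : βhat [] = 0) (h₂ : βtil [] = 0)
    (h₃ : xiOp ν v βhat = 0) (h₄ : xiOp ν v βtil = 0)
    (h₅ : xiOp ν v δ = conv δ βhat - conv βtil δ) :
    xiOp ν v δ = 0 :=
  stmt15_general ν v δ βhat βtil h₁ h₂ h₃ h₄ h₅
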